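/- Let E be a Banach space and X : E → E a C¹ vector field. Suppose there exists a continuous, positive, non-decreasing, locally Lipschitz function α : [0,∞) → ℝ with ∫₀^∞ dx/α(x) = ∞ such that ‖X(p)‖ < α(‖p‖) for all p ∈ E. Then every maximal integral curve of X is defined on all of ℝ. -/

import Mathlib

/-!
Along an integral curve `c` of `X`, `‖c‖` grows no faster than the solution `w` of `w' = α w`:
with `F y = ∫₀^y dx / α x` one gets `F ‖c t‖ ≤ F ‖c t₀‖ + (t - t₀)`. Since `F → ∞`, a maximal
integral curve stays bounded, and hence has bounded velocity, on bounded time intervals. At a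
finite end of its domain it would therefore have a limit, and the local flow near that limit
would continue it. Time reversal gives the same in the past.
-/

open Set Filter Topology Metric

section

variable {E : Type*} [NormedAddCommGroup E] [NormedSpace ℝ E]

theorem eqOn_Ioo_of_locallyLipschitz {X : E → E} (hX : LocallyLipschitz X) {f g : ℝ → E}
    {a b t₀ : ℝ} (ht₀ : t₀ ∈ Ioo a b) (hf : ∀ t ∈ Ioo a b, HasDerivAt f (X (f t)) t)
    (hg : ∀ t ∈ Ioo a b, HasDerivAt g (X (g t)) t) (h : f t₀ = g t₀) :
    EqOn f g (Ioo a b) := by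
  intro t ht
  -- `X` is Lipschitz on the compact set swept out by both curves over a compact subinterval
  set a' := (a + min t₀ t) / 2
  set b' := (b + max t₀ t) / 2
  have hsub : Icc a' b' ⊆ Ioo a b := Icc_subset_Ioo (by grind) (by grind)
  set K := f '' Icc a' b' ∪ g '' Icc a' b'
  have hK : IsCompact K :=
    (isCompact_Icc.image_of_continuousOn fun s hs ↦
      (hf s (hsub hs)).continuousAt.continuousWithinAt).union
    (isCompact_Icc.image_of_continuousOn fun s hs ↦
      (hg s (hsub hs)).continuousAt.continuousWithinAt)
  obtain ⟨L, hL⟩ := (hX.locallyLipschitzOn (s := K)).exists_lipschitzOnWith_of_compact hK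
  have hmem : Ioo a' b' ⊆ Icc a' b' := Ioo_subset_Icc_self
  exact ODE_solution_unique_of_mem_Ioo (v := fun _ ↦ X) (s := fun _ ↦ K) (fun _ _ ↦ hL)
    (t₀ := t₀) ⟨by grind, by grind⟩
    (fun s hs ↦ ⟨hf s (hsub (hmem hs)), .inl ⟨s, hmem hs, rfl⟩⟩)
    (fun s hs ↦ ⟨hg s (hsub (hmem hs)), .inr ⟨s, hmem hs, rfl⟩⟩) h ⟨by grind, by grind⟩

theorem exists_tendsto_nhdsLT_of_norm_deriv_le [CompleteSpace E] {f f' : ℝ → E} {a b L : ℝ}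
    (hab : a < b) (hf : ∀ t ∈ Ico a b, HasDerivAt f (f' t) t) (hL : ∀ t ∈ Ico a b, ‖f' t‖ ≤ L) :
    ∃ y, Tendsto f (𝓝[<] b) (𝓝 y) := by
  have hlip : LipschitzOnWith L.toNNReal f (Ico a b) :=
    (convex_Ico a b).lipschitzOnWith_of_nnnorm_hasDerivWithin_le
      (fun t ht ↦ (hf t ht).hasDerivWithinAt) fun t ht ↦ by
        rw [← NNReal.coe_le_coe, coe_nnnorm]; exact (hL t ht).trans (Real.le_coe_toNNReal L)
  rw [← nhdsWithin_Ico_eq_nhdsLT hab]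
  have : (𝓝[Ico a b] b).NeBot := by
    rw [nhdsWithin_Ico_eq_nhdsLT hab]; infer_instance
  exact cauchy_map_iff_exists_tendsto.mp
    ((cauchy_nhds.mono nhdsWithin_le_nhds).map_of_le hlip.uniformContinuousOn inf_le_right)

theorem exists_ode_solution_glue {X : E → E} (hX : LocallyLipschitz X) {f g : ℝ → E}
    {a b c d t₁ : ℝ} (ht₁ : t₁ ∈ Ioo a b ∩ Ioo c d) (hbd : b ≤ d)
    (hf : ∀ t ∈ Ioo a b, HasDerivAt f (X (f t)) t) (hg : ∀ t ∈ Ioo c d, HasDerivAt g (X (g t)) t)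
    (h : f t₁ = g t₁) :
    ∃ k : ℝ → E, EqOn k f (Ioo a b) ∧ ∀ t ∈ Ioo a d, HasDerivAt k (X (k t)) t := by
  obtain ⟨⟨hat₁, ht₁b⟩, hct₁, ht₁d⟩ := ht₁
  have hfg : EqOn f g (Ioo (max a c) b) :=
    eqOn_Ioo_of_locallyLipschitz hX ⟨max_lt hat₁ hct₁, ht₁b⟩
      (fun t ht ↦ hf t ⟨(le_max_left a c).trans_lt ht.1, ht.2⟩)
      (fun t ht ↦ hg t ⟨(le_max_right a c).trans_lt ht.1, ht.2.trans_le hbd⟩) h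
  set k : ℝ → E := fun t ↦ if t < t₁ then f t else g t
  have hkf : EqOn k f (Ioo a t₁) := fun t ht ↦ if_pos ht.2
  have hkg : EqOn k g (Ioo (max a c) d) := fun t ht ↦ by
    by_cases htt₁ : t < t₁
    · exact (if_pos htt₁).trans (hfg ⟨ht.1, htt₁.trans ht₁b⟩)
    · exact if_neg htt₁
  refine ⟨k, fun t ht ↦ ?_, fun t ht ↦ ?_⟩
  · rcases lt_or_ge t t₁ with htt₁ | htt₁
    · exact hkf ⟨ht.1, htt₁⟩
    · exact (hkg ⟨(max_lt hat₁ hct₁).trans_le htt₁, ht.2.trans_le hbd⟩).trans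
        (hfg ⟨(max_lt hat₁ hct₁).trans_le htt₁, ht.2⟩).symm
  · rcases lt_or_ge t t₁ with htt₁ | htt₁
    · rw [hkf ⟨ht.1, htt₁⟩]
      exact (hf t ⟨ht.1, htt₁.trans ht₁b⟩).congr_of_eventuallyEq
        (hkf.eventuallyEq_of_mem (Ioo_mem_nhds ht.1 htt₁))
    · have ht' : t ∈ Ioo (max a c) d := ⟨(max_lt hat₁ hct₁).trans_le htt₁, ht.2⟩
      rw [hkg ht']
      exact (hg t ⟨hct₁.trans_le htt₁, ht.2⟩).congr_of_eventuallyEq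
        (hkg.eventuallyEq_of_mem (isOpen_Ioo.mem_nhds ht'))

theorem exists_ode_solution_extension [CompleteSpace E] {X : E → E} (hX : ContDiff ℝ 1 X)
    {f : ℝ → E} {a b t₁ L : ℝ} (ht₁ : t₁ ∈ Ioo a b) (hf : ∀ t ∈ Ioo a b, HasDerivAt f (X (f t)) t)
    (hL : ∀ t ∈ Ico t₁ b, ‖X (f t)‖ ≤ L) :
    ∃ b' > b, ∃ g : ℝ → E, EqOn g f (Ioo a b) ∧ ∀ t ∈ Ioo a b', HasDerivAt g (X (g t)) t := by
  obtain ⟨y, hy⟩ := exists_tendsto_nhdsLT_of_norm_deriv_le ht₁.2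
    (fun t ht ↦ hf t ⟨ht₁.1.trans_le ht.1, ht.2⟩) hL
  obtain ⟨r, hr, ε, hε, hsol⟩ :=
    (hX.contDiffAt (x := y)).exists_forall_mem_closedBall_exists_eq_forall_mem_Ioo_hasDerivAt 0
  -- the local flow near the limit `y` lives for a uniform time `ε`; start it within `ε` of `b`
  obtain ⟨t₂, ⟨⟨hft₂, hεt₂⟩, hat₂⟩, ht₂b⟩ :
      ∃ t₂, ((f t₂ ∈ closedBall y r ∧ b - ε < t₂) ∧ a < t₂) ∧ t₂ < b :=
    (((hy.eventually (closedBall_mem_nhds y hr)).and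
      ((eventually_gt_nhds (sub_lt_self b hε)).filter_mono nhdsWithin_le_nhds)).and
      ((eventually_gt_nhds (ht₁.1.trans ht₁.2)).filter_mono nhdsWithin_le_nhds)).and
      self_mem_nhdsWithin |>.exists
  obtain ⟨φ, hφ₀, hφ⟩ := hsol (f t₂) hft₂
  have hφ' : ∀ t ∈ Ioo (t₂ - ε) (t₂ + ε), HasDerivAt (fun t ↦ φ (t - t₂)) (X (φ (t - t₂))) t :=
    fun t ht ↦ (hφ (t - t₂) ⟨by linarith [ht.1], by linarith [ht.2]⟩).comp_sub_const t t₂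
  obtain ⟨g, hgf, hg⟩ := exists_ode_solution_glue hX.locallyLipschitz
    ⟨⟨hat₂, ht₂b⟩, by linarith, by linarith⟩ (by linarith) hf hφ' (by simp [hφ₀])
  exact ⟨t₂ + ε, by linarith, g, hgf, hg⟩

noncomputable def invIntegral (α : ℝ → ℝ) (y : ℝ) : ℝ := ∫ x in (0 : ℝ)..y, (α x)⁻¹

section Comparison

variable {α : ℝ → ℝ}

theorem hasDerivAt_invIntegral (hαc : Continuous α) (hαpos : ∀ x, 0 ≤ x → 0 < α x) {y : ℝ}
    (hy : 0 ≤ y) : HasDerivAt (invIntegral α) (α y)⁻¹ y := by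
  have hO : IsOpen {x | 0 < α x} := isOpen_lt continuous_const hαc
  have hcont : ContinuousOn (fun x ↦ (α x)⁻¹) {x | 0 < α x} :=
    hαc.continuousOn.inv₀ fun x hx ↦ hx.ne'
  have hsub : uIcc 0 y ⊆ {x | 0 < α x} := fun x hx ↦
    hαpos x (by rw [uIcc_of_le hy] at hx; exact hx.1)
  exact intervalIntegral.integral_hasDerivAt_right (hcont.mono hsub).intervalIntegrable
    (hcont.stronglyMeasurableAtFilter hO y (hαpos y hy))
    (hcont.continuousAt (hO.mem_nhds (hαpos y hy)))

theorem invIntegral_monotoneOn (hαc : Continuous α) (hαpos : ∀ x, 0 ≤ x → 0 < α x) :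
    MonotoneOn (invIntegral α) (Ici 0) :=
  monotoneOn_of_hasDerivWithinAt_nonneg (convex_Ici 0)
    (fun _ hy ↦ (hasDerivAt_invIntegral hαc hαpos hy).continuousAt.continuousWithinAt)
    (fun _ hy ↦ (hasDerivAt_invIntegral hαc hαpos (interior_subset hy)).hasDerivWithinAt)
    (fun y hy ↦ (inv_pos.2 (hαpos y (interior_subset hy))).le)

theorem invIntegral_norm_le (hαc : Continuous α) (hαpos : ∀ x, 0 ≤ x → 0 < α x)
    (hαmono : ∀ x y, 0 ≤ x → x ≤ y → α x ≤ α y) {c c' : ℝ → E} {a b t₀ t : ℝ}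
    (hc : ∀ s ∈ Ioo a b, HasDerivAt c (c' s) s) (hc' : ∀ s ∈ Ioo a b, ‖c' s‖ ≤ α ‖c s‖)
    (ht₀ : t₀ ∈ Ioo a b) (ht : t ∈ Ioo a b) (hle : t₀ ≤ t) :
    invIntegral α ‖c t‖ ≤ invIntegral α ‖c t₀‖ + (t - t₀) := by
  have hIcc : Icc t₀ t ⊆ Ioo a b := Icc_subset_Ioo ht₀.1 ht.2
  have hαc' : ContinuousOn (fun s ↦ α ‖c s‖) (Ioo a b) := fun s hs ↦
    (hαc.continuousAt.comp (hc s hs).continuousAt.norm).continuousWithinAt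
  -- `v` majorizes `‖c‖` and `v' = α ‖c‖ ≤ α v`
  set v : ℝ → ℝ := fun s ↦ ‖c t₀‖ + ∫ u in t₀..s, α ‖c u‖
  have hv : ∀ s ∈ Icc t₀ t, HasDerivAt v (α ‖c s‖) s := fun s hs ↦
    ((intervalIntegral.integral_hasDerivAt_right
      ((hαc'.mono ((uIcc_of_le hs.1).symm ▸
        (Icc_subset_Icc_right hs.2).trans hIcc)).intervalIntegrable)
      (hαc'.stronglyMeasurableAtFilter isOpen_Ioo s (hIcc hs))
      (hαc'.continuousAt (isOpen_Ioo.mem_nhds (hIcc hs))))).const_add _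
  have hcv : ∀ s ∈ Icc t₀ t, ‖c s‖ ≤ v s :=
    image_norm_le_of_norm_deriv_right_le_deriv_boundary'
      (fun s hs ↦ (hc s (hIcc hs)).continuousAt.continuousWithinAt)
      (fun s hs ↦ (hc s (hIcc (Ico_subset_Icc_self hs))).hasDerivWithinAt)
      (by simp [v]) (fun s hs ↦ (hv s hs).continuousAt.continuousWithinAt)
      (fun s hs ↦ (hv s (Ico_subset_Icc_self hs)).hasDerivWithinAt)
      (fun s hs ↦ hc' s (hIcc (Ico_subset_Icc_self hs)))
  have hv0 : ∀ s ∈ Icc t₀ t, 0 ≤ v s := fun s hs ↦ (norm_nonneg _).trans (hcv s hs)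
  have hFv : ∀ s ∈ Icc t₀ t,
      HasDerivAt (fun s ↦ invIntegral α (v s)) ((α (v s))⁻¹ * α ‖c s‖) s :=
    fun s hs ↦ (hasDerivAt_invIntegral hαc hαpos (hv0 s hs)).comp s (hv s hs)
  have hFv_le : invIntegral α (v t) ≤ invIntegral α ‖c t₀‖ + (t - t₀) :=
    image_le_of_deriv_right_le_deriv_boundary
      (fun s hs ↦ (hFv s hs).continuousAt.continuousWithinAt)
      (fun s hs ↦ (hFv s (Ico_subset_Icc_self hs)).hasDerivWithinAt)
      (by simp [v]) (by fun_prop)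
      (fun s _ ↦ ((hasDerivAt_id s).sub_const t₀).const_add _ |>.hasDerivWithinAt)
      (fun s hs ↦ by
        have hs' := Ico_subset_Icc_self hs
        rw [inv_mul_le_one₀ (hαpos _ (hv0 s hs'))]
        exact hαmono _ _ (norm_nonneg _) (hcv s hs'))
      ⟨hle, le_rfl⟩
  exact (invIntegral_monotoneOn hαc hαpos (norm_nonneg _) (hv0 t ⟨hle, le_rfl⟩)
    (hcv t ⟨hle, le_rfl⟩)).trans hFv_le

end Comparison

section MaximalSolution

variable (X : E → E) (t₀ : ℝ) (x₀ : E)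

def solutionDomain : Set ℝ :=
  {t | ∃ f : ℝ → E, ∃ a b : ℝ, t₀ ∈ Ioo a b ∧ t ∈ Ioo a b ∧ f t₀ = x₀ ∧
    ∀ s ∈ Ioo a b, HasDerivAt f (X (f s)) s}

open Classical in
noncomputable def maximalSolution (t : ℝ) : E :=
  if h : t ∈ solutionDomain X t₀ x₀ then h.choose t else x₀

variable {X t₀ x₀}

theorem Ioo_subset_solutionDomain {f : ℝ → E} {a b : ℝ} (ht₀ : t₀ ∈ Ioo a b) (hf₀ : f t₀ = x₀)
    (hf : ∀ s ∈ Ioo a b, HasDerivAt f (X (f s)) s) : Ioo a b ⊆ solutionDomain X t₀ x₀ :=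
  fun _ ht ↦ ⟨f, a, b, ht₀, ht, hf₀, hf⟩

theorem ordConnected_solutionDomain : (solutionDomain X t₀ x₀).OrdConnected := by
  refine ⟨fun t ⟨f, a, b, ht₀, ht, hf₀, hf⟩ u ⟨g, c, d, hu₀, hu, hg₀, hg⟩ s hs ↦ ?_⟩
  rcases le_total s t₀ with hst₀ | hst₀
  · exact Ioo_subset_solutionDomain ht₀ hf₀ hf ⟨ht.1.trans_le hs.1, hst₀.trans_lt ht₀.2⟩
  · exact Ioo_subset_solutionDomain hu₀ hg₀ hg ⟨hu₀.1.trans_le hst₀, hs.2.trans_lt hu.2⟩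

theorem maximalSolution_eqOn (hX : LocallyLipschitz X) {f : ℝ → E} {a b : ℝ} (ht₀ : t₀ ∈ Ioo a b)
    (hf₀ : f t₀ = x₀) (hf : ∀ s ∈ Ioo a b, HasDerivAt f (X (f s)) s) :
    EqOn (maximalSolution X t₀ x₀) f (Ioo a b) := by
  intro t ht
  have hdom := Ioo_subset_solutionDomain ht₀ hf₀ hf ht
  obtain ⟨a', b', ht₀', ht', hg₀, hg⟩ := hdom.choose_spec
  rw [maximalSolution, dif_pos hdom]
  exact eqOn_Ioo_of_locallyLipschitz hX (a := max a a') (b := min b b')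
    ⟨max_lt ht₀.1 ht₀'.1, lt_min ht₀.2 ht₀'.2⟩
    (fun s hs ↦ hg s ⟨(le_max_right _ _).trans_lt hs.1, hs.2.trans_le (min_le_right _ _)⟩)
    (fun s hs ↦ hf s ⟨(le_max_left _ _).trans_lt hs.1, hs.2.trans_le (min_le_left _ _)⟩)
    (hg₀.trans hf₀.symm) ⟨max_lt ht.1 ht'.1, lt_min ht.2 ht'.2⟩

theorem maximalSolution_self (hX : LocallyLipschitz X) (ht₀ : t₀ ∈ solutionDomain X t₀ x₀) :
    maximalSolution X t₀ x₀ t₀ = x₀ := by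
  obtain ⟨f, a, b, ht₀, -, hf₀, hf⟩ := ht₀
  exact (maximalSolution_eqOn hX ht₀ hf₀ hf ht₀).trans hf₀

theorem hasDerivAt_maximalSolution (hX : LocallyLipschitz X) {t : ℝ}
    (ht : t ∈ solutionDomain X t₀ x₀) :
    HasDerivAt (maximalSolution X t₀ x₀) (X (maximalSolution X t₀ x₀ t)) t := by
  obtain ⟨f, a, b, ht₀, ht, hf₀, hf⟩ := ht
  have heq := maximalSolution_eqOn hX ht₀ hf₀ hf
  rw [heq ht]
  exact (hf t ht).congr_of_eventuallyEq (heq.eventuallyEq_of_mem (isOpen_Ioo.mem_nhds ht))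

theorem mem_solutionDomain_self [CompleteSpace E] (hX : ContDiff ℝ 1 X) :
    t₀ ∈ solutionDomain X t₀ x₀ := by
  obtain ⟨f, hf₀, ε, hε, hf⟩ :=
    (hX.contDiffAt (x := x₀)).exists_forall_mem_closedBall_exists_eq_forall_mem_Ioo_hasDerivAt₀ t₀
  have ht₀ : t₀ ∈ Ioo (t₀ - ε) (t₀ + ε) := ⟨by linarith, by linarith⟩
  exact ⟨f, _, _, ht₀, ht₀, hf₀, hf⟩

theorem neg_mem_solutionDomain {t : ℝ} (ht : t ∈ solutionDomain (fun p ↦ -X p) (-t₀) x₀) :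
    -t ∈ solutionDomain X t₀ x₀ := by
  obtain ⟨f, a, b, ht₀, ht, hf₀, hf⟩ := ht
  refine ⟨fun s ↦ f (-s), -b, -a, ⟨by linarith [ht₀.2], by linarith [ht₀.1]⟩,
    ⟨by linarith [ht.2], by linarith [ht.1]⟩, by simpa using hf₀, fun s hs ↦ ?_⟩
  simpa [Function.comp_def] using
    (hf (-s) ⟨by linarith [hs.2], by linarith [hs.1]⟩).scomp s (hasDerivAt_neg s)

theorem not_bddAbove_solutionDomain [CompleteSpace E] (hX : ContDiff ℝ 1 X) {α : ℝ → ℝ}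
    (hαc : Continuous α) (hαpos : ∀ x, 0 ≤ x → 0 < α x)
    (hαmono : ∀ x y, 0 ≤ x → x ≤ y → α x ≤ α y) (hαdiv : Tendsto (invIntegral α) atTop atTop)
    (hbound : ∀ p, ‖X p‖ ≤ α ‖p‖) : ¬BddAbove (solutionDomain X t₀ x₀) := by
  intro hbdd
  obtain ⟨f, a, b, ht₀, -, hf₀, hf⟩ := mem_solutionDomain_self (t₀ := t₀) (x₀ := x₀) hX
  have hab : Ioo a b ⊆ solutionDomain X t₀ x₀ := Ioo_subset_solutionDomain ht₀ hf₀ hf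
  set T := sSup (solutionDomain X t₀ x₀)
  have hmid : (t₀ + b) / 2 ∈ solutionDomain X t₀ x₀ :=
    hab ⟨by linarith [ht₀.1, ht₀.2], by linarith [ht₀.2]⟩
  have hT : t₀ < T := by linarith [le_csSup hbdd hmid, ht₀.2]
  have hdom : Ioo a T ⊆ solutionDomain X t₀ x₀ := by
    intro u hu
    rcases lt_or_ge u b with hub | hub
    · exact hab ⟨hu.1, hub⟩
    · obtain ⟨v, hv, huv⟩ := exists_lt_of_lt_csSup ⟨_, hmid⟩ hu.2
      exact ordConnected_solutionDomain.out (hab ht₀) hv ⟨ht₀.2.le.trans hub, huv.le⟩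
  set c := maximalSolution X t₀ x₀
  have hc : ∀ t ∈ Ioo a T, HasDerivAt c (X (c t)) t := fun t ht ↦
    hasDerivAt_maximalSolution hX.locallyLipschitz (hdom ht)
  have hc₀ : c t₀ = x₀ := maximalSolution_self hX.locallyLipschitz (hab ht₀)
  obtain ⟨B, hB⟩ :=
    (hαdiv.eventually_gt_atTop (invIntegral α ‖x₀‖ + (T - t₀))).exists_forall_of_atTop
  have hcB : ∀ t ∈ Ico t₀ T, ‖c t‖ ≤ B := fun t ht ↦ by
    by_contra! h
    have hcomp := invIntegral_norm_le hαc hαpos hαmono hc (fun s _ ↦ hbound (c s)) ⟨ht₀.1, hT⟩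
      ⟨ht₀.1.trans_le ht.1, ht.2⟩ ht.1
    rw [hc₀] at hcomp
    linarith [hB _ h.le, ht.2]
  obtain ⟨b', hb', g, hgc, hg⟩ := exists_ode_solution_extension hX ⟨ht₀.1, hT⟩ hc (L := α B)
    fun t ht ↦ (hbound _).trans (hαmono _ _ (norm_nonneg _) (hcB t ht))
  have hb'dom : (T + b') / 2 ∈ solutionDomain X t₀ x₀ :=
    Ioo_subset_solutionDomain ⟨ht₀.1, hT.trans hb'⟩ ((hgc ⟨ht₀.1, hT⟩).trans hc₀) hg
      ⟨by linarith [ht₀.1], by linarith⟩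
  linarith [le_csSup hbdd hb'dom]

theorem exists_forall_hasDerivAt_of_norm_le [CompleteSpace E] (hX : ContDiff ℝ 1 X)
    {α : ℝ → ℝ} (hαc : Continuous α) (hαpos : ∀ x, 0 ≤ x → 0 < α x)
    (hαmono : ∀ x y, 0 ≤ x → x ≤ y → α x ≤ α y) (hαdiv : Tendsto (invIntegral α) atTop atTop)
    (hbound : ∀ p, ‖X p‖ ≤ α ‖p‖) (t₀ : ℝ) (x₀ : E) :
    ∃ f : ℝ → E, f t₀ = x₀ ∧ ∀ t, HasDerivAt f (X (f t)) t := by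
  have hdom (t : ℝ) : t ∈ solutionDomain X t₀ x₀ := by
    obtain ⟨u, hu, htu⟩ := not_bddAbove_iff.mp
      (not_bddAbove_solutionDomain (t₀ := t₀) (x₀ := x₀) hX hαc hαpos hαmono hαdiv hbound) t
    obtain ⟨l, hl, htl⟩ := not_bddAbove_iff.mp
      (not_bddAbove_solutionDomain (t₀ := -t₀) (x₀ := x₀) hX.neg hαc hαpos hαmono hαdiv
        (by simpa using hbound)) (-t)
    exact ordConnected_solutionDomain.out (neg_mem_solutionDomain hl) hu ⟨by linarith, htu.le⟩
  exact ⟨maximalSolution X t₀ x₀, maximalSolution_self hX.locallyLipschitz (hdom t₀),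
    fun t ↦ hasDerivAt_maximalSolution hX.locallyLipschitz (hdom t)⟩

end MaximalSolution

end

theorem stmt_5_general {E : Type*} [NormedAddCommGroup E] [NormedSpace ℝ E] [CompleteSpace E]
    (X : E → E) (hX : ContDiff ℝ 1 X)
    (α : ℝ → ℝ) (hαc : Continuous α)
    (hαpos : ∀ x, 0 ≤ x → 0 < α x)
    (hαmono : ∀ x y, 0 ≤ x → x ≤ y → α x ≤ α y)
    (hαdiv : Filter.Tendsto (fun y => ∫ x in (0:ℝ)..y, (α x)⁻¹) Filter.atTop Filter.atTop)
    (hbound : ∀ p : E, ‖X p‖ < α ‖p‖)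
    (a b : ℝ) (c : ℝ → E)
    (hc : ∀ t ∈ Set.Ioo a b, HasDerivAt c (X (c t)) t) :
    ∃ c' : ℝ → E, (∀ t ∈ Set.Ioo a b, c' t = c t) ∧ ∀ t : ℝ, HasDerivAt c' (X (c' t)) t := by
  set t₀ := (a + b) / 2 with ht₀_def
  obtain ⟨f, hf₀, hf⟩ := exists_forall_hasDerivAt_of_norm_le hX hαc hαpos hαmono hαdiv
    (fun p ↦ (hbound p).le) t₀ (c t₀)
  refine ⟨f, fun t ht ↦ ?_, hf⟩
  have ht₀ : t₀ ∈ Ioo a b := ⟨by linarith [ht.1, ht.2], by linarith [ht.1, ht.2]⟩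
  exact eqOn_Ioo_of_locallyLipschitz hX.locallyLipschitz ht₀ (fun s _ ↦ hf s) hc hf₀ ht

/-- A `C¹` vector field on a Banach space that is primarily bounded (i.e. `‖X p‖ < α ‖p‖` for a
positive, non-decreasing, locally Lipschitz `α` with `∫₀^∞ dx/α(x) = ∞`) is complete. -/
theorem stmt_5 {E : Type*} [NormedAddCommGroup E] [NormedSpace ℝ E] [CompleteSpace E]
    (X : E → E) (hX : ContDiff ℝ 1 X)
    (α : ℝ → ℝ) (hαc : Continuous α) (hαl : LocallyLipschitz α)
    (hαpos : ∀ x, 0 ≤ x → 0 < α x)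
    (hαmono : ∀ x y, 0 ≤ x → x ≤ y → α x ≤ α y)
    (hαdiv : Filter.Tendsto (fun y => ∫ x in (0:ℝ)..y, (α x)⁻¹) Filter.atTop Filter.atTop)
    (hbound : ∀ p : E, ‖X p‖ < α ‖p‖)
    (a b : ℝ) (c : ℝ → E)
    (hc : ∀ t ∈ Set.Ioo a b, HasDerivAt c (X (c t)) t) :
    ∃ c' : ℝ → E, (∀ t ∈ Set.Ioo a b, c' t = c t) ∧ ∀ t : ℝ, HasDerivAt c' (X (c' t)) t :=
  stmt_5_general X hX α hαc hαpos hαmono hαdiv hbound a b c hc
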